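/- arXiv:0802.2842 — 2 statements merged into one kernel-verified Lean document; each statement's English description precedes it below -/
import Mathlib

section
/- (Replication Lemma, forward direction.) If a state p of a deterministic parity tree automaton is productive and is replicated by an accepting loop, then there exists an accepting run of the automaton in which p occurs at infinitely many pairwise incomparable nodes. -/
/-- One-step transition relation of a deterministic tree automaton. -/
def Step {Q A : Type*} (δ : Q → A → Fin 2 → Q) (p q : Q) : Prop := ∃ σ d, δ p σ d = q

/-- `ρ` is a run of the automaton `δ` on the input tree `t` (starting from an
arbitrary chosen state at the root). -/
def IsRun {Q A : Type*} (δ : Q → A → Fin 2 → Q) (t : List (Fin 2) → A)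
    (ρ : List (Fin 2) → Q) : Prop :=
  ∀ v d, ρ (v ++ [d]) = δ (ρ v) (t v) d

/-- The node at depth `n` on the branch `b` of the full binary tree. -/
def node2 (b : ℕ → Fin 2) (n : ℕ) : List (Fin 2) := List.ofFn fun i : Fin n => b i

/-- `r` occurs infinitely often in the sequence `f`. -/
def InfOcc (f : ℕ → ℕ) (r : ℕ) : Prop := ∀ m, ∃ n, m ≤ n ∧ f n = r

/-- The parity condition on one branch: the highest rank occurring infinitely
often is even. -/
def AcceptingBranch (f : ℕ → ℕ) : Prop :=
  ∃ r, Even r ∧ InfOcc f r ∧ ∀ r', InfOcc f r' → r' ≤ r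

/-- A run is accepting if every infinite branch satisfies the parity condition. -/
def Accepting {Q : Type*} (rank : Q → ℕ) (ρ : List (Fin 2) → Q) : Prop :=
  ∀ b : ℕ → Fin 2, AcceptingBranch fun n => rank (ρ (node2 b n))

/-- A state is productive if it occurs in some accepting run. -/
def Productive {Q A : Type*} (δ : Q → A → Fin 2 → Q) (rank : Q → ℕ) (p : Q) : Prop :=
  ∃ t ρ, IsRun δ t ρ ∧ Accepting rank ρ ∧ ∃ v, ρ v = p

/-- A loop (cycle) in the automaton, presented as an `m`-periodic sequence of
states connected by transitions. -/
def IsCycle {Q A : Type*} (δ : Q → A → Fin 2 → Q) (c : ℕ → Q) (m : ℕ) : Prop :=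
  0 < m ∧ (∀ n, c (n + m) = c n) ∧ ∀ n, Step δ (c n) (c (n + 1))

/-- The maximal rank on the loop `c` is even (the loop is accepting). -/
def MaxRankEven {Q : Type*} (rank : Q → ℕ) (c : ℕ → Q) : Prop :=
  ∃ r, Even r ∧ (∃ n, rank (c n) = r) ∧ ∀ n, rank (c n) ≤ r

/-- The maximal rank on the loop `c` is odd (the loop is rejecting). -/
def MaxRankOdd {Q : Type*} (rank : Q → ℕ) (c : ℕ → Q) : Prop :=
  ∃ r, Odd r ∧ (∃ n, rank (c n) = r) ∧ ∀ n, rank (c n) ≤ r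

/-- Reachability along transitions. -/
def Reaches {Q A : Type*} (δ : Q → A → Fin 2 → Q) : Q → Q → Prop :=
  Relation.ReflTransGen (Step δ)

/-- `p` is replicated by an accepting loop: there is an accepting loop `c`, whose
transition at `c 0` reads `σ` in direction `d₀`, and a path starting with the
transition on `(σ, d₁)`, `d₁ ≠ d₀`, leading from `c 0` to `p`. -/
def ReplicatedByAccLoop {Q A : Type*} (δ : Q → A → Fin 2 → Q) (rank : Q → ℕ)
    (p : Q) : Prop :=
  ∃ (c : ℕ → Q) (m : ℕ) (σ : A) (d₀ d₁ : Fin 2),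
    IsCycle δ c m ∧ MaxRankEven rank c ∧ δ (c 0) σ d₀ = c 1 ∧ d₀ ≠ d₁ ∧
      Reaches δ (δ (c 0) σ d₁) p

/-! ### Auxiliary lemmas -/

lemma fin2_other' {a b : Fin 2} (h : a ≠ b) : b = 1 - a := by
  fin_cases a <;> fin_cases b <;> simp_all

lemma infOcc_shift (f g : ℕ → ℕ) (N : ℕ) (h : ∀ j, f (N + j) = g j) (r : ℕ) :
    InfOcc f r ↔ InfOcc g r := by
  constructor
  · intro hf m
    obtain ⟨n, hn, hfn⟩ := hf (N + m)
    have hN : N ≤ n := le_trans (Nat.le_add_right _ _) hn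
    refine ⟨n - N, by omega, ?_⟩
    have := h (n - N)
    rw [Nat.add_sub_cancel' hN] at this
    omega
  · intro hg m
    obtain ⟨j, hj, hgj⟩ := hg m
    exact ⟨N + j, by omega, by rw [h j]; exact hgj⟩

lemma acceptingBranch_shift (f g : ℕ → ℕ) (N : ℕ) (h : ∀ j, f (N + j) = g j) :
    AcceptingBranch f ↔ AcceptingBranch g := by
  constructor <;> rintro ⟨r, hr, hio, hmax⟩
  · exact ⟨r, hr, (infOcc_shift f g N h r).mp hio,
      fun r' h' => hmax r' ((infOcc_shift f g N h r').mpr h')⟩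
  · exact ⟨r, hr, (infOcc_shift f g N h r).mpr hio,
      fun r' h' => hmax r' ((infOcc_shift f g N h r').mp h')⟩

lemma node2_split (b : ℕ → Fin 2) (k j : ℕ) :
    node2 b (k + j) = node2 b k ++ List.ofFn (fun i : Fin j => b (k + i)) := by
  apply List.ext_getElem
  · simp [node2]
  · intro i h1 h2
    simp only [node2, List.getElem_ofFn]
    by_cases h : i < k
    · rw [List.getElem_append_left (by simpa [node2] using h)]
      simp [node2]
    · rw [List.getElem_append_right (by simpa [node2] using h)]
      simp only [node2, List.length_ofFn, List.getElem_ofFn]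
      exact congrArg b (by omega)

section Aux

variable {Q A : Type*} {δ : Q → A → Fin 2 → Q} {rank : Q → ℕ}

lemma subtree_isRun {t : List (Fin 2) → A} {ρ : List (Fin 2) → Q} (h : IsRun δ t ρ)
    (v : List (Fin 2)) : IsRun δ (fun w => t (v ++ w)) (fun w => ρ (v ++ w)) := by
  intro w d
  have := h (v ++ w) d
  rwa [List.append_assoc] at this

lemma subtree_accepting {ρ : List (Fin 2) → Q} (h : Accepting rank ρ)
    (v : List (Fin 2)) : Accepting rank (fun w => ρ (v ++ w)) := by
  intro b
  set b' : ℕ → Fin 2 := fun i => if h : i < v.length then v[i] else b (i - v.length) with hb'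
  have hnode : ∀ j, node2 b' (v.length + j) = v ++ node2 b j := by
    intro j
    rw [node2_split]
    congr 1
    · apply List.ext_getElem
      · simp [node2]
      · intro i h1 h2
        simp only [node2, List.getElem_ofFn, hb']
        simp [h2]
    · simp only [node2]
      congr 1
      funext i
      simp only [hb']
      rw [dif_neg (by omega)]
      congr 1
      omega
  have key : ∀ j, rank (ρ (node2 b' (v.length + j)))
      = rank ((fun w => ρ (v ++ w)) (node2 b j)) := by
    intro j; rw [hnode]
  exact (acceptingBranch_shift _ _ v.length key).mp (h b')

lemma exists_root_run {q : Q} (h : Productive δ rank q) :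
    ∃ t ρ, IsRun δ t ρ ∧ Accepting rank ρ ∧ ρ [] = q := by
  obtain ⟨t, ρ, hr, ha, v, hv⟩ := h
  exact ⟨_, _, subtree_isRun hr v, subtree_accepting ha v, by simpa using hv⟩

lemma node2_succ (b : ℕ → Fin 2) (j : ℕ) :
    node2 b (1 + j) = b 0 :: node2 (fun i => b (i + 1)) j := by
  rw [Nat.add_comm]
  simp [node2, List.ofFn_succ]

lemma graft (q : Q) (σ : A) (ts : Fin 2 → List (Fin 2) → A) (rs : Fin 2 → List (Fin 2) → Q)
    (hrun : ∀ d, IsRun δ (ts d) (rs d)) (hacc : ∀ d, Accepting rank (rs d))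
    (hroot : ∀ d, rs d [] = δ q σ d) :
    ∃ t ρ, IsRun δ t ρ ∧ Accepting rank ρ ∧ ρ [] = q ∧ ∀ d w, ρ (d :: w) = rs d w := by
  refine ⟨fun v => match v with | [] => σ | e :: w => ts e w,
          fun v => match v with | [] => q | e :: w => rs e w, ?_, ?_, rfl, fun d w => rfl⟩
  · intro v d
    match v with
    | [] => simpa using hroot d
    | e :: w => exact hrun e w d
  · intro b
    have key : ∀ j, (fun n => rank ((fun v => match v with | [] => q | e :: w => rs e w)
          (node2 b n))) (1 + j)
        = (fun n => rank (rs (b 0) (node2 (fun i => b (i + 1)) n))) j := by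
      intro j
      simp only [node2_succ]
    exact (acceptingBranch_shift _ _ 1 key).mpr (hacc (b 0) (fun i => b (i + 1)))

lemma reach_run (hprod : ∀ q : Q, Productive δ rank q) {q p : Q} (hreach : Reaches δ q p) :
    ∃ t ρ, IsRun δ t ρ ∧ Accepting rank ρ ∧ ρ [] = q ∧ ∃ w, ρ w = p := by
  induction hreach using Relation.ReflTransGen.head_induction_on with
  | refl =>
    obtain ⟨t, ρ, h1, h2, h3⟩ := exists_root_run (hprod p)
    exact ⟨t, ρ, h1, h2, h3, [], h3⟩
  | head hstep _ ih =>
    rename_i a b' _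
    obtain ⟨σ, d, hd⟩ := hstep
    obtain ⟨t1, ρ1, ht1, ha1, hr1, w, hw⟩ := ih
    have H : ∀ e : Fin 2, ∃ tρ : (List (Fin 2) → A) × (List (Fin 2) → Q),
        IsRun δ tρ.1 tρ.2 ∧ Accepting rank tρ.2 ∧ tρ.2 [] = δ a σ e ∧
          (e = d → ∃ w', tρ.2 w' = p) := by
      intro e
      by_cases he : e = d
      · subst he
        exact ⟨(t1, ρ1), ht1, ha1, by show ρ1 [] = _; rw [hr1]; exact hd.symm,
          fun _ => ⟨w, hw⟩⟩
      · obtain ⟨t2, ρ2, h1, h2, h3⟩ := exists_root_run (hprod (δ a σ e))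
        exact ⟨(t2, ρ2), h1, h2, h3, fun h => absurd h he⟩
    choose F hF using H
    obtain ⟨t, ρ, h1, h2, h3, h4⟩ := graft a σ (fun e => (F e).1) (fun e => (F e).2)
      (fun e => (hF e).1) (fun e => (hF e).2.1) (fun e => (hF e).2.2.1)
    obtain ⟨w', hw'⟩ := (hF d).2.2.2 rfl
    exact ⟨t, ρ, h1, h2, h3, d :: w', by rw [h4]; exact hw'⟩

end Aux

/-! ### The global run built along the loop -/

def buildRun {Q : Type*} (c : ℕ → Q) (D : ℕ → Fin 2) (rs : ℕ → List (Fin 2) → Q) :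
    ℕ → List (Fin 2) → Q
  | n, [] => c n
  | n, e :: w => if e = D n then buildRun c D rs (n + 1) w else rs n w

def buildTree {A : Type*} (σf : ℕ → A) (D : ℕ → Fin 2) (ts : ℕ → List (Fin 2) → A) :
    ℕ → List (Fin 2) → A
  | n, [] => σf n
  | n, e :: w => if e = D n then buildTree σf D ts (n + 1) w else ts n w

section Build

variable {Q A : Type*} {δ : Q → A → Fin 2 → Q} {c : ℕ → Q} {σf : ℕ → A} {Df : ℕ → Fin 2}
  {rs : ℕ → List (Fin 2) → Q} {ts : ℕ → List (Fin 2) → A}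

lemma buildRun_isRun
    (hδf : ∀ n, δ (c n) (σf n) (Df n) = c (n + 1))
    (hq : ∀ n, rs n [] = δ (c n) (σf n) (1 - Df n))
    (hrs : ∀ n, IsRun δ (ts n) (rs n)) :
    ∀ (v : List (Fin 2)) (n : ℕ) (d : Fin 2),
      buildRun c Df rs n (v ++ [d]) = δ (buildRun c Df rs n v) (buildTree σf Df ts n v) d := by
  intro v
  induction v with
  | nil =>
    intro n d
    simp only [List.nil_append, buildRun, buildTree]
    by_cases h : d = Df n
    · rw [if_pos h, h]
      exact (hδf n).symm
    · rw [if_neg h, fin2_other' (Ne.symm h)]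
      exact hq n
  | cons e w ih =>
    intro n d
    simp only [List.cons_append, buildRun, buildTree]
    by_cases h : e = Df n
    · rw [if_pos h, if_pos h, if_pos h]
      exact ih (n + 1) d
    · rw [if_neg h, if_neg h, if_neg h]
      exact hrs n w d

lemma buildRun_prefix (b : ℕ → Fin 2) :
    ∀ (n k : ℕ), (∀ i < n, b (k + i) = Df (k + i)) → ∀ w,
      buildRun c Df rs k ((List.ofFn fun i : Fin n => b (k + i)) ++ w)
        = buildRun c Df rs (k + n) w := by
  intro n
  induction n with
  | zero => intro k _ w; simp
  | succ n ih =>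
    intro k hb w
    rw [List.ofFn_succ]
    simp only [Fin.val_zero, Nat.add_zero, Fin.val_succ, List.cons_append, buildRun,
      List.append_eq]
    rw [if_pos (show b k = Df k by simpa using hb 0 (Nat.succ_pos n))]
    have harg : (fun i : Fin n => b (k + (↑i + 1))) = fun i : Fin n => b (k + 1 + ↑i) :=
      funext fun i => congrArg b (by omega)
    rw [harg, ih (k + 1)
      (fun i hi => by
        have := hb (i + 1) (by omega)
        rwa [show k + (i + 1) = k + 1 + i by omega] at this) w]
    congr 1
    omega

lemma buildRun_prefix0 (b : ℕ → Fin 2) (n : ℕ) (h : ∀ i < n, b i = Df i) (w : List (Fin 2)) :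
    buildRun c Df rs 0 (node2 b n ++ w) = buildRun c Df rs n w := by
  have := buildRun_prefix (c := c) (Df := Df) (rs := rs) b n 0
    (fun i hi => by simpa using h i hi) w
  simpa [node2] using this

end Build

/-- Replication Lemma, forward direction: in an automaton all of whose states are
productive, if a state `p` is productive and is replicated by an accepting loop,
then there is an accepting run in which `p` occurs at infinitely many pairwise
incomparable nodes. -/
theorem replication_lemma_forward {Q A : Type*} [Fintype Q]
    (δ : Q → A → Fin 2 → Q) (rank : Q → ℕ)
    (hprod : ∀ q : Q, Productive δ rank q) (p : Q)
    (hp : Productive δ rank p) (hrep : ReplicatedByAccLoop δ rank p) :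
    ∃ t ρ, IsRun δ t ρ ∧ Accepting rank ρ ∧
      ∃ v : ℕ → List (Fin 2), (∀ i j, i ≠ j → ¬ v i <+: v j) ∧ ∀ i, ρ (v i) = p := by
  classical
  obtain ⟨c, m, σ, d₀, d₁, ⟨hm, hper, hstep⟩, hmax, hδ0, hne, hreach⟩ := hrep
  have hd₁ : d₁ = 1 - d₀ := fin2_other' hne
  have hper' : ∀ k n, c (n + k * m) = c n := by
    intro k
    induction k with
    | zero => simp
    | succ k ih =>
      intro n
      rw [show n + (k + 1) * m = (n + k * m) + m by ring, hper, ih]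
  set σf : ℕ → A := fun n => if m ∣ n then σ else (hstep n).choose with hσf
  set Df : ℕ → Fin 2 := fun n =>
    if h : m ∣ n then d₀ else (hstep n).choose_spec.choose with hDf
  have hc0 : ∀ n, m ∣ n → c n = c 0 := by
    rintro n ⟨k, hk⟩
    rw [show n = 0 + k * m by rw [hk]; ring]
    exact hper' k 0
  have hc1 : ∀ n, m ∣ n → c (n + 1) = c 1 := by
    rintro n ⟨k, hk⟩
    rw [show n + 1 = 1 + k * m by rw [hk]; ring]
    exact hper' k 1
  have hδf : ∀ n, δ (c n) (σf n) (Df n) = c (n + 1) := by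
    intro n
    by_cases h : m ∣ n
    · simp only [hσf, hDf, if_pos h, dif_pos h]
      rw [hc0 n h, hc1 n h]
      exact hδ0
    · simp only [hσf, hDf, if_neg h, dif_neg h]
      exact (hstep n).choose_spec.choose_spec
  have hqs : ∀ n, m ∣ n → δ (c n) (σf n) (1 - Df n) = δ (c 0) σ d₁ := by
    intro n h
    simp only [hσf, hDf, if_pos h, dif_pos h]
    rw [hc0 n h, ← hd₁]
  have hDf0 : ∀ k : ℕ, Df (k * m) = d₀ := by
    intro k
    simp only [hDf]
    rw [dif_pos (dvd_mul_left m k)]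
  obtain ⟨T', R', hTrun, hTacc, hTroot, w₀, hw₀⟩ := reach_run hprod hreach
  have Hsub : ∀ n, ∃ tρ : (List (Fin 2) → A) × (List (Fin 2) → Q),
      IsRun δ tρ.1 tρ.2 ∧ Accepting rank tρ.2 ∧
        tρ.2 [] = δ (c n) (σf n) (1 - Df n) ∧ (m ∣ n → tρ.2 w₀ = p) := by
    intro n
    by_cases h : m ∣ n
    · exact ⟨(T', R'), hTrun, hTacc,
        by show R' [] = _; rw [hTroot, hqs n h], fun _ => hw₀⟩
    · obtain ⟨t2, ρ2, h1, h2, h3⟩ := exists_root_run (hprod (δ (c n) (σf n) (1 - Df n)))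
      exact ⟨(t2, ρ2), h1, h2, h3, fun hc => absurd hc h⟩
  choose F hF using Hsub
  refine ⟨buildTree σf Df (fun n => (F n).1) 0, buildRun c Df (fun n => (F n).2) 0, ?_, ?_, ?_⟩
  · intro v d
    exact buildRun_isRun hδf (fun n => (hF n).2.2.1) (fun n => (hF n).1) v 0 d
  · -- the run is accepting
    intro b
    by_cases hall : ∀ n, b n = Df n
    · -- the main branch
      have hnode : ∀ n, buildRun c Df (fun n => (F n).2) 0 (node2 b n) = c n := by
        intro n
        have := buildRun_prefix0 (c := c) (Df := Df) (rs := fun n => (F n).2) b n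
          (fun i _ => hall i) []
        simpa [buildRun] using this
      obtain ⟨r, hre, ⟨n₀, hn₀⟩, hbound⟩ := hmax
      refine ⟨r, hre, ?_, ?_⟩
      · intro M
        refine ⟨n₀ + M * m, ?_, ?_⟩
        · have : M ≤ M * m := Nat.le_mul_of_pos_right M hm
          omega
        · simp only [hnode]
          rw [hper' M n₀, hn₀]
      · intro r' hio
        obtain ⟨n, _, hn⟩ := hio 0
        simp only [hnode] at hn
        rw [← hn]
        exact hbound n
    · -- branch deviating from the main branch
      push_neg at hall
      set n₀ := Nat.find hall with hn₀def
      have hne0 : b n₀ ≠ Df n₀ := Nat.find_spec hall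
      have hlt : ∀ i < n₀, b i = Df i := fun i hi => not_not.mp (Nat.find_min hall hi)
      have key : ∀ j, rank (buildRun c Df (fun n => (F n).2) 0 (node2 b (n₀ + 1 + j)))
          = rank ((F n₀).2 (node2 (fun i => b (n₀ + 1 + i)) j)) := by
        intro j
        congr 1
        have h1 : node2 b (n₀ + 1) = node2 b n₀ ++ [b n₀] := by
          rw [node2_split b n₀ 1]
          congr 1
        have hsplit : node2 b (n₀ + 1 + j)
            = node2 b n₀ ++ (b n₀ :: node2 (fun i => b (n₀ + 1 + i)) j) := by
          rw [node2_split b (n₀ + 1) j, h1, List.append_assoc]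
          rfl
        rw [hsplit, buildRun_prefix0 b n₀ hlt]
        simp only [buildRun]
        rw [if_neg hne0]
      exact (acceptingBranch_shift _ _ (n₀ + 1) key).mpr
        ((hF n₀).2.1 (fun i => b (n₀ + 1 + i)))
  · -- the nodes where p occurs
    refine ⟨fun i => node2 Df (i * m) ++ d₁ :: w₀, ?_, ?_⟩
    · -- pairwise incomparable
      intro i j hij hpre
      have hget_eq : ∀ (x y : List (Fin 2)) (n : ℕ), x <+: y → n < x.length →
          y[n]? = x[n]? := by
        rintro x y n ⟨tl, rfl⟩ hn
        exact List.getElem?_append_left hn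
      have hgA : ∀ k n, n < k * m → (node2 Df (k * m) ++ d₁ :: w₀)[n]? = some (Df n) := by
        intro k n hn
        rw [List.getElem?_append_left (by simpa [node2] using hn)]
        simp [node2, hn]
      have hgB : ∀ k, (node2 Df (k * m) ++ d₁ :: w₀)[k * m]? = some d₁ := by
        intro k
        rw [List.getElem?_append_right (by simp [node2])]
        simp [node2]
      have hlen : ∀ k, (node2 Df (k * m) ++ d₁ :: w₀).length = k * m + 1 + w₀.length := by
        intro k; simp [node2]; omega
      rcases Nat.lt_or_ge i j with h | h
      · have hlt : i * m < j * m := Nat.mul_lt_mul_of_pos_right h hm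
        have e1 := hget_eq _ _ (i * m) hpre (by rw [hlen]; omega)
        rw [hgA j (i * m) hlt, hgB i] at e1
        have : Df (i * m) = d₁ := Option.some.inj e1
        rw [hDf0 i] at this
        exact hne this
      · have h' : j < i := lt_of_le_of_ne h (Ne.symm hij)
        have hlt : j * m < i * m := Nat.mul_lt_mul_of_pos_right h' hm
        have e1 := hget_eq _ _ (j * m) hpre (by rw [hlen]; omega)
        rw [hgB j, hgA i (j * m) hlt] at e1
        have : d₁ = Df (j * m) := Option.some.inj e1
        rw [hDf0 j] at this
        exact hne this.symm
    · intro i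
      rw [buildRun_prefix0 Df (i * m) (fun _ _ => rfl)]
      simp only [buildRun]
      rw [if_neg (show ¬ d₁ = Df (i * m) by rw [hDf0 i]; exact fun h => hne h.symm)]
      exact (hF (i * m)).2.2.2 (dvd_mul_left m i)
end

section
/- (Replication Lemma, converse direction.) If a state p occurs at infinitely many pairwise incomparable nodes of an accepting run of a deterministic parity tree automaton with finite state set Q, then p is replicated by an accepting loop: there exists a state q lying on an accepting loop of the automaton and a path from q to p branching off that loop. -/
/-!
By Kőnig's lemma there is a branch `b` of the tree every node of which lies below infinitely many
of the nodes `v i`. Since these nodes are pairwise incomparable, infinitely many of them branch off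
`b`, and by pigeonhole infinitely many of the branching points carry the same state `q`. Beyond
some depth all ranks on `b` are at most the even rank `r` that occurs infinitely often there, so
the segment of `b` between two such branching points with an occurrence of `r` in between is an
accepting loop through `q`, and the run below the first branching point leads from `q` to `p`.
-/

lemma node2_succ_s9 (b : ℕ → Fin 2) (n : ℕ) : node2 b (n + 1) = node2 b n ++ [b n] := by
  simp only [node2, List.ofFn_succ', List.concat_eq_append, Fin.val_castSucc, Fin.val_last]

@[simp]
lemma node2_length (b : ℕ → Fin 2) (n : ℕ) : (node2 b n).length = n := by
  simp [node2]

lemma node2_prefix_node2 (b : ℕ → Fin 2) {m n : ℕ} (h : m ≤ n) : node2 b m <+: node2 b n := by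
  induction n, h using Nat.le_induction with
  | base => exact List.prefix_refl _
  | succ n _ ih => exact node2_succ_s9 b n ▸ ih.trans (List.prefix_append _ _)

lemma List.IsPrefix.eq_or_append_singleton_prefix {α : Type*} {u w : List α} (h : u <+: w) :
    w = u ∨ ∃ d, u ++ [d] <+: w := by
  obtain ⟨_ | ⟨d, rest⟩, rfl⟩ := h
  · exact .inl (List.append_nil u)
  · exact .inr ⟨d, rest, by simp⟩

lemma exists_branch_forall_node2 (P : List (Fin 2) → Prop) (h₀ : P [])
    (h : ∀ u, P u → ∃ d, P (u ++ [d])) : ∃ b : ℕ → Fin 2, ∀ n, P (node2 b n) := by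
  choose d hd using h
  let grow : {u // P u} → {u // P u} := fun u => ⟨u.1 ++ [d u.1 u.2], hd u.1 u.2⟩
  let seq : ℕ → {u // P u} := fun n => grow^[n] ⟨[], h₀⟩
  have hseq : ∀ n, node2 (fun n => d (seq n).1 (seq n).2) n = (seq n).1 := by
    intro n
    induction n with
    | zero => rfl
    | succ n ih => rw [node2_succ_s9, ih]; simp only [seq, Function.iterate_succ_apply']; rfl
  exact ⟨_, fun n => hseq n ▸ (seq n).2⟩

lemma exists_child_infinite {v : ℕ → List (Fin 2)} (hv : Function.Injective v)
    {u : List (Fin 2)} (hu : {i | u <+: v i}.Infinite) :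
    ∃ d, {i | u ++ [d] <+: v i}.Infinite := by
  by_contra! hfin
  have hcover : {i | u <+: v i} ⊆ v ⁻¹' {u} ∪ ⋃ d, {i | u ++ [d] <+: v i} := fun i hi =>
    (hi.eq_or_append_singleton_prefix).imp id Set.mem_iUnion.2
  exact hu ((((Set.finite_singleton u).preimage hv.injOn).union
    (Set.finite_iUnion hfin)).subset hcover)

lemma eq_node2_or_exists_branch_off (b : ℕ → Fin 2) {N : ℕ} {w : List (Fin 2)}
    (hw : node2 b N <+: w) :
    w = node2 b w.length ∨ ∃ n ≥ N, ∃ d ≠ b n, node2 b n ++ [d] <+: w := by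
  induction hk : w.length - N generalizing N with
  | zero =>
    have hlen : w.length = N := by
      have := hw.length_le
      simp only [node2_length] at this
      omega
    rw [hlen]
    exact .inl (hw.eq_of_length (by simp [hlen])).symm
  | succ k ih =>
    rcases hw.eq_or_append_singleton_prefix with rfl | ⟨d, hd⟩
    · simp at hk
    by_cases hdb : d = b N
    · rcases ih (node2_succ_s9 b N ▸ hdb ▸ hd) (by omega) with h | ⟨n, hn, h⟩
      · exact .inl h
      · exact .inr ⟨n, by omega, h⟩
    · exact .inr ⟨N, le_rfl, d, hdb, hd⟩

lemma exists_branch_off {v : ℕ → List (Fin 2)} (hinc : ∀ i j, i ≠ j → ¬ v i <+: v j)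
    (b : ℕ → Fin 2) {N : ℕ} (h : {i | node2 b N <+: v i}.Nontrivial) :
    ∃ n ≥ N, ∃ i, ∃ d ≠ b n, node2 b n ++ [d] <+: v i := by
  by_contra! hoff
  have on_branch : ∀ i, node2 b N <+: v i → v i = node2 b (v i).length := fun i hi =>
    (eq_node2_or_exists_branch_off b hi).resolve_right fun ⟨n, hn, d, hd, hpre⟩ =>
      hoff n hn i d hd hpre
  obtain ⟨i, hi, j, hj, hij⟩ := h
  rcases le_total (v i).length (v j).length with hle | hle
  · exact hinc i j hij (on_branch i hi ▸ on_branch j hj ▸ node2_prefix_node2 b hle)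
  · exact hinc j i hij.symm (on_branch i hi ▸ on_branch j hj ▸ node2_prefix_node2 b hle)

section Automaton

open Filter

variable {Q A : Type*} {δ : Q → A → Fin 2 → Q}

lemma IsRun.apply_node2_succ {t : List (Fin 2) → A} {ρ : List (Fin 2) → Q} (hrun : IsRun δ t ρ)
    (b : ℕ → Fin 2) (n : ℕ) :
    ρ (node2 b (n + 1)) = δ (ρ (node2 b n)) (t (node2 b n)) (b n) := by
  rw [node2_succ_s9, hrun]

lemma IsRun.reaches_of_prefix {t : List (Fin 2) → A} {ρ : List (Fin 2) → Q}
    (hrun : IsRun δ t ρ) {u w : List (Fin 2)} (h : u <+: w) : Reaches δ (ρ u) (ρ w) := by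
  obtain ⟨tail, rfl⟩ := h
  induction tail using List.reverseRecOn with
  | nil => rw [List.append_nil]; exact .refl
  | append_singleton tail d ih =>
    rw [← List.append_assoc]
    exact ih.tail ⟨t (u ++ tail), d, (hrun _ _).symm⟩

lemma AcceptingBranch.exists_even_eventually_le [Finite Q] {rank : Q → ℕ} {g : ℕ → Q}
    (h : AcceptingBranch fun n => rank (g n)) :
    ∃ r, Even r ∧ (∃ᶠ n in atTop, rank (g n) = r) ∧ ∀ᶠ n in atTop, rank (g n) ≤ r := by
  obtain ⟨r, hr, hinf, hmax⟩ := h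
  refine ⟨r, hr, frequently_atTop.2 hinf, ?_⟩
  by_contra! habove
  obtain ⟨q, hq⟩ : ∃ q, ∃ᶠ n in atTop, r < rank (g n) ∧ g n = q :=
    frequently_exists.1 (habove.mono fun n hn => ⟨g n, hn, rfl⟩)
  obtain ⟨n, hn, rfl⟩ := hq.exists
  have hinfq : InfOcc (fun n => rank (g n)) (rank (g n)) :=
    frequently_atTop.1 (hq.mono fun k hk => congrArg rank hk.2)
  exact (hmax _ hinfq).not_gt hn

lemma apply_add_add_one_mod {α : Type*} {s : ℕ → α} {a m : ℕ} (hm : 0 < m)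
    (hloop : s (a + m) = s a) (j : ℕ) : s (a + (j + 1) % m) = s (a + j % m + 1) := by
  rw [← Nat.mod_add_mod, add_assoc]
  rcases (show j % m + 1 < m ∨ j % m + 1 = m by have := Nat.mod_lt j hm; omega) with hlt | heq
  · rw [Nat.mod_eq_of_lt hlt]
  · rw [heq, Nat.mod_self, add_zero, hloop]

lemma isCycle_of_apply_add_eq {s : ℕ → Q} (hs : ∀ n, Step δ (s n) (s (n + 1))) {a m : ℕ}
    (hm : 0 < m) (hloop : s (a + m) = s a) : IsCycle δ (fun k => s (a + k % m)) m :=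
  ⟨hm, fun k => by simp only [Nat.add_mod_right], fun k => by
    simp only [apply_add_add_one_mod hm hloop]; exact hs _⟩

theorem replicatedByAccLoop_of_path {rank : Q → ℕ} {p : Q} {s : ℕ → Q}
    (hs : ∀ n, Step δ (s n) (s (n + 1))) {a k c r : ℕ} (hak : a ≤ k) (hkc : k < c)
    (hloop : s c = s a) (hr : Even r) (hk : rank (s k) = r)
    (hle : ∀ n, a ≤ n → n < c → rank (s n) ≤ r) {σ : A} {d₀ d₁ : Fin 2}
    (hd₀ : δ (s a) σ d₀ = s (a + 1)) (hd : d₀ ≠ d₁) (hp : Reaches δ (δ (s a) σ d₁) p) :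
    ReplicatedByAccLoop δ rank p := by
  have hm : 0 < c - a := by omega
  have hloop' : s (a + (c - a)) = s a := by rw [Nat.add_sub_cancel' (by omega), hloop]
  refine ⟨fun j => s (a + j % (c - a)), c - a, σ, d₀, d₁, isCycle_of_apply_add_eq hs hm hloop',
    ⟨r, hr, ⟨k - a, ?_⟩, fun j => hle _ (by omega) (by have := Nat.mod_lt j hm; omega)⟩,
    ?_, hd, by simpa using hp⟩
  · dsimp only
    rw [Nat.mod_eq_of_lt (by omega), Nat.add_sub_cancel' hak, hk]
  · simpa [apply_add_add_one_mod hm hloop' 0] using hd₀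

end Automaton

/-- Replication Lemma, converse direction: if a state `p` occurs at infinitely
many pairwise incomparable nodes of an accepting run, then `p` is replicated by
an accepting loop. -/
theorem replication_lemma_converse {Q A : Type*} [Fintype Q]
    (δ : Q → A → Fin 2 → Q) (rank : Q → ℕ) (p : Q)
    (t : List (Fin 2) → A) (ρ : List (Fin 2) → Q)
    (hrun : IsRun δ t ρ) (hacc : Accepting rank ρ)
    (v : ℕ → List (Fin 2)) (hinc : ∀ i j, i ≠ j → ¬ v i <+: v j)
    (hv : ∀ i, ρ (v i) = p) :
    ReplicatedByAccLoop δ rank p := by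
  have hinj : Function.Injective v := fun i j hij =>
    by_contra fun hne => hinc i j hne (hij ▸ List.prefix_refl _)
  obtain ⟨b, hb⟩ := exists_branch_forall_node2 (fun u => {i | u <+: v i}.Infinite)
    (by simpa using Set.infinite_univ) fun _ => exists_child_infinite hinj
  obtain ⟨r, hr, hr_freq, hr_le⟩ := (hacc b).exists_even_eventually_le
  have hoff : ∃ᶠ n in Filter.atTop, ∃ i, ∃ d ≠ b n, node2 b n ++ [d] <+: v i :=
    Filter.frequently_atTop.2 fun N => exists_branch_off hinc b (hb N).nontrivial
  obtain ⟨q, hq⟩ : ∃ q, ∃ᶠ n in Filter.atTop, (∃ i, ∃ d ≠ b n, node2 b n ++ [d] <+: v i) ∧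
      ρ (node2 b n) = q :=
    Filter.frequently_exists.1 (hoff.mono fun n hn => ⟨_, hn, rfl⟩)
  obtain ⟨N, hN⟩ := Filter.eventually_atTop.1 hr_le
  obtain ⟨a, ha, ⟨i, d₁, hd₁, hpre⟩, rfl⟩ := Filter.frequently_atTop.1 hq N
  obtain ⟨k, hk, hkr⟩ := Filter.frequently_atTop.1 hr_freq a
  obtain ⟨c, hc, -, hqc⟩ := Filter.frequently_atTop.1 hq (k + 1)
  refine replicatedByAccLoop_of_path (fun n => ⟨_, _, (hrun.apply_node2_succ b n).symm⟩) hk hc hqc hr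
    hkr (fun n hn _ => hN n (ha.trans hn)) (hrun.apply_node2_succ b a).symm hd₁.symm ?_
  rw [← hrun, ← hv i]
  exact hrun.reaches_of_prefix hpre
end
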